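/- Let p ≥ 1 and n ≥ 1 be integers and m a real with -n/2 < m < p/2+1. Let H: (0,∞) → [0,∞) and Π: (0,∞) → [0,∞) be measurable with ∫_0^∞ H(η)/η dη < ∞ and ∫_0^∞ Π(g)/(g+1)^{m-1} dg < ∞. Then ∫_{ℝ^p}∫_0^∞∫_0^∞∫_0^∞ [‖x‖² s^{n/2-1} / (‖x‖²/s)^m] · F(g,η;‖x‖²/s,s) · H(η) Π(g) dg dη ds dx = q₃(m) · (∫_0^∞ H(η)/η dη) · (∫_0^∞ Π(g)/(g+1)^{m-1} dg), where q₃(m) = 2^{p/2+n/2+1} π^{p/2} Γ(p/2+1-m)Γ(n/2+m)/Γ(p/2). -/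

import Mathlib

open MeasureTheory Real Set

/-- The kernel `F(g,η;w,s)`. -/
noncomputable def Fker (p n : ℕ) (g η w s : ℝ) : ℝ :=
  η ^ ((p : ℝ) / 2 + (n : ℝ) / 2) * (g + 1) ^ (-(p : ℝ) / 2) *
    Real.exp (-(η * s / 2) * (w / (g + 1) + 1))

/-- The constant `q₃(m)`. -/
noncomputable def q3 (p n : ℕ) (m : ℝ) : ℝ :=
  2 ^ ((p : ℝ) / 2 + (n : ℝ) / 2 + 1) * π ^ ((p : ℝ) / 2) *
    (Real.Gamma ((p : ℝ) / 2 + 1 - m) * Real.Gamma ((n : ℝ) / 2 + m)) /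
    Real.Gamma ((p : ℝ) / 2)

/-!
For `x ≠ 0` the integrand splits as a Gaussian moment `‖x‖^(2-2m) exp(-c‖x‖²)` with
`c = η/(2(g+1))`, a Gamma density `s^(n/2+m-1) exp(-ηs/2)`, and a factor depending on `(η, g)`
only. Everything is nonnegative, so by Tonelli the `x`- and `s`-integrals may be done first;
polar coordinates give `π^(p/2) Γ(p/2+1-m)/Γ(p/2) · c^(m-p/2-1)`, the `s`-integral gives
`(2/η)^(n/2+m) Γ(n/2+m)`, and the powers of `η` and `g+1` collapse to
`2^(p/2+n/2+1) / (η (g+1)^(m-1))`. What is left is the product of the integrals of `H(η)/η` and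
`Π(g)/(g+1)^(m-1)`, which is finite, so the iterated Bochner integral is its real part.
-/

open scoped ENNReal

section Iterated

variable {α β γ δ : Type*} [MeasurableSpace α] [MeasurableSpace β] [MeasurableSpace γ]
  [MeasurableSpace δ] {μ : Measure α} {ν : Measure β} {ρ : Measure γ} {τ : Measure δ}

theorem lintegral_lintegral_lintegral_lintegral_swap [SFinite μ] [SFinite ν] [SFinite ρ]
    [SFinite τ] {f : α → β → γ → δ → ℝ≥0∞}
    (hf : Measurable fun q : (α × β) × γ × δ => f q.1.1 q.1.2 q.2.1 q.2.2) :
    ∫⁻ a, ∫⁻ b, ∫⁻ c, ∫⁻ d, f a b c d ∂τ ∂ρ ∂ν ∂μ =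
      ∫⁻ c, ∫⁻ d, ∫⁻ a, ∫⁻ b, f a b c d ∂ν ∂μ ∂τ ∂ρ := by
  have hcd : ∀ a b, ∫⁻ c, ∫⁻ d, f a b c d ∂τ ∂ρ = ∫⁻ w, f a b w.1 w.2 ∂ρ.prod τ := fun a b =>
    (lintegral_prod _ (hf.comp (measurable_prodMk_left (x := (a, b)))).aemeasurable).symm
  have hab : ∀ c d, ∫⁻ a, ∫⁻ b, f a b c d ∂ν ∂μ = ∫⁻ z, f z.1 z.2 c d ∂μ.prod ν := fun c d =>
    (lintegral_prod _ (hf.comp (measurable_prodMk_right (y := (c, d)))).aemeasurable).symm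
  simp only [hcd, hab]
  rw [← lintegral_prod _ hf.lintegral_prod_right'.aemeasurable,
    lintegral_lintegral_swap hf.aemeasurable, lintegral_prod _ hf.lintegral_prod_left'.aemeasurable]

theorem integral_eq_toReal_lintegral {f : α → ℝ} {L : α → ℝ≥0∞} (hL : AEMeasurable L μ)
    (hfin : ∫⁻ a, L a ∂μ ≠ ∞) (hf : ∀ᵐ a ∂μ, L a ≠ ∞ → f a = (L a).toReal) :
    ∫ a, f a ∂μ = (∫⁻ a, L a ∂μ).toReal := by
  have hlt := ae_lt_top' hL hfin
  rw [← integral_toReal hL hlt]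
  refine integral_congr_ae ?_
  filter_upwards [hf, hlt] with a ha hlt using ha hlt.ne

theorem integral_integral_integral_integral_eq_toReal [SFinite ν] [SFinite ρ] [SFinite τ]
    {f : α → β → γ → δ → ℝ}
    (hf : Measurable fun q : ((α × β) × γ) × δ => f q.1.1.1 q.1.1.2 q.1.2 q.2)
    (hf₀ : ∀ a, ∀ᵐ b ∂ν, ∀ᵐ c ∂ρ, ∀ᵐ d ∂τ, 0 ≤ f a b c d)
    (hfin : ∫⁻ a, ∫⁻ b, ∫⁻ c, ∫⁻ d, ENNReal.ofReal (f a b c d) ∂τ ∂ρ ∂ν ∂μ ≠ ∞) :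
    ∫ a, ∫ b, ∫ c, ∫ d, f a b c d ∂τ ∂ρ ∂ν ∂μ =
      (∫⁻ a, ∫⁻ b, ∫⁻ c, ∫⁻ d, ENNReal.ofReal (f a b c d) ∂τ ∂ρ ∂ν ∂μ).toReal := by
  have hL₃ := hf.ennreal_ofReal.lintegral_prod_right' (ν := τ)
  have hL₂ := hL₃.lintegral_prod_right' (ν := ρ)
  have hL₁ := hL₂.lintegral_prod_right' (ν := ν)
  refine integral_eq_toReal_lintegral hL₁.aemeasurable hfin (.of_forall fun a ha => ?_)
  refine integral_eq_toReal_lintegral (hL₂.comp (measurable_prodMk_left (x := a))).aemeasurable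
    ha ?_
  filter_upwards [hf₀ a] with b hb hfinb
  refine integral_eq_toReal_lintegral
    (hL₃.comp (measurable_prodMk_left (x := (a, b)))).aemeasurable hfinb ?_
  filter_upwards [hb] with c hc _
  exact integral_eq_lintegral_of_nonneg_ae hc
    (hf.comp (measurable_prodMk_left (x := ((a, b), c)))).aestronglyMeasurable

end Iterated

section GaussianMoments

variable {E : Type*} [NormedAddCommGroup E] [InnerProductSpace ℝ E] [FiniteDimensional ℝ E]
  [MeasurableSpace E] [BorelSpace E] [Nontrivial E]

local notation "d" => (Module.finrank ℝ E : ℝ)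

omit [MeasurableSpace E] [BorelSpace E] in
theorem rpow_finrank_sub_one_smul_rpow_mul_exp {q c y : ℝ} (hy : 0 < y) :
    y ^ (Module.finrank ℝ E - 1) • (y ^ q * exp (-c * y ^ 2)) =
      y ^ (q + d - 1) * exp (-c * y ^ (2 : ℝ)) := by
  rw [smul_eq_mul, ← mul_assoc, ← rpow_natCast, ← rpow_add hy, rpow_two,
    Nat.cast_sub Module.finrank_pos, Nat.cast_one]
  ring_nf

theorem integrable_norm_rpow_mul_exp_neg_mul_sq {q c : ℝ} (hq : -d < q) (hc : 0 < c) :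
    Integrable fun x : E => ‖x‖ ^ q * exp (-c * ‖x‖ ^ 2) := by
  rw [integrable_fun_norm_addHaar volume (f := fun y => y ^ q * exp (-c * y ^ 2))]
  exact (integrableOn_rpow_mul_exp_neg_mul_rpow (by linarith) two_pos hc).congr_fun
    (fun y hy => (rpow_finrank_sub_one_smul_rpow_mul_exp hy).symm) measurableSet_Ioi

theorem integral_norm_rpow_mul_exp_neg_mul_sq {q c : ℝ} (hq : -d < q) (hc : 0 < c) :
    ∫ x : E, ‖x‖ ^ q * exp (-c * ‖x‖ ^ 2) =
      π ^ (d / 2) * Gamma ((d + q) / 2) / Gamma (d / 2) * c ^ (-((d + q) / 2)) := by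
  rw [integral_fun_norm_addHaar volume (fun y => y ^ q * exp (-c * y ^ 2)),
    setIntegral_congr_fun measurableSet_Ioi fun y hy => rpow_finrank_sub_one_smul_rpow_mul_exp hy,
    integral_rpow_mul_exp_neg_mul_rpow two_pos (by linarith) hc, measureReal_def,
    InnerProductSpace.volume_ball]
  have hd : 0 < d := Nat.cast_pos.mpr Module.finrank_pos
  have hπ : √π ^ Module.finrank ℝ E = π ^ (d / 2) := by
    rw [sqrt_eq_rpow, ← rpow_natCast, ← rpow_mul pi_pos.le]
    ring_nf
  have hΓ : Gamma (d / 2) ≠ 0 := (Gamma_pos_of_pos (by positivity)).ne'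
  rw [Gamma_add_one (by positivity), hπ]
  simp only [ENNReal.ofReal_one, one_pow, one_mul, nsmul_eq_mul, smul_eq_mul]
  rw [ENNReal.toReal_ofReal (by positivity), show (q + d - 1 + 1) / 2 = (d + q) / 2 by ring,
    show -(q + d - 1 + 1) / 2 = -((d + q) / 2) by ring]
  field_simp

theorem lintegral_norm_rpow_mul_exp_neg_mul_sq {q c : ℝ} (hq : -d < q) (hc : 0 < c) :
    ∫⁻ x : E, ENNReal.ofReal (‖x‖ ^ q * exp (-c * ‖x‖ ^ 2)) =
      ENNReal.ofReal
        (π ^ (d / 2) * Gamma ((d + q) / 2) / Gamma (d / 2) * c ^ (-((d + q) / 2))) := by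
  rw [← integral_norm_rpow_mul_exp_neg_mul_sq hq hc,
    ofReal_integral_eq_lintegral_ofReal (integrable_norm_rpow_mul_exp_neg_mul_sq hq hc)
      (.of_forall fun x => by positivity)]

end GaussianMoments

theorem lintegral_rpow_mul_exp_neg_mul_Ioi {a r : ℝ} (ha : 0 < a) (hr : 0 < r) :
    ∫⁻ t in Ioi (0 : ℝ), ENNReal.ofReal (t ^ (a - 1) * exp (-(r * t))) =
      ENNReal.ofReal ((1 / r) ^ a * Gamma a) := by
  have hint : IntegrableOn (fun t : ℝ => t ^ (a - 1) * exp (-(r * t))) (Ioi 0) := by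
    refine (integrableOn_rpow_mul_exp_neg_mul_rpow (s := a - 1) (by linarith) one_pos hr).congr_fun
      (fun t _ => ?_) measurableSet_Ioi
    simp only [rpow_one, neg_mul]
  rw [← integral_rpow_mul_exp_neg_mul_Ioi ha hr, ofReal_integral_eq_lintegral_ofReal hint]
  filter_upwards [ae_restrict_mem measurableSet_Ioi] with t (ht : 0 < t)
  positivity

/-- The integrand of the theorem, with `t = ‖x‖`. -/
noncomputable def kernelIntegrand (p n : ℕ) (m : ℝ) (H Pf : ℝ → ℝ) (t s η g : ℝ) : ℝ :=
  (t ^ 2 * s ^ ((n : ℝ) / 2 - 1) / (t ^ 2 / s) ^ m) * Fker p n g η (t ^ 2 / s) s * H η * Pf g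

theorem kernelIntegrand_nonneg (p n : ℕ) (m : ℝ) {H Pf : ℝ → ℝ} (t : ℝ) {s η g : ℝ}
    (hs : 0 ≤ s) (hη : 0 ≤ η) (hg : 0 ≤ g) (hH : 0 ≤ H η) (hP : 0 ≤ Pf g) :
    0 ≤ kernelIntegrand p n m H Pf t s η g := by
  unfold kernelIntegrand Fker
  positivity

theorem kernelIntegrand_eq (p n : ℕ) (m : ℝ) (H Pf : ℝ → ℝ) {t s η g : ℝ} (ht : 0 < t)
    (hs : 0 < s) (hg : g + 1 ≠ 0) :
    kernelIntegrand p n m H Pf t s η g =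
      (t ^ (2 - 2 * m) * exp (-(η / (2 * (g + 1))) * t ^ 2)) *
        (s ^ ((n : ℝ) / 2 + m - 1) * exp (-(η / 2 * s))) *
        (η ^ ((p : ℝ) / 2 + (n : ℝ) / 2) * (g + 1) ^ (-(p : ℝ) / 2) * H η * Pf g) := by
  have hpow : t ^ 2 * s ^ ((n : ℝ) / 2 - 1) / (t ^ 2 / s) ^ m =
      t ^ (2 - 2 * m) * s ^ ((n : ℝ) / 2 + m - 1) := by
    have hsq : (t ^ 2) ^ m = t ^ (2 * m) := by
      rw [← rpow_two, ← rpow_mul ht.le]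
    rw [div_rpow (by positivity) hs.le, hsq, rpow_sub ht, rpow_two,
      show (n : ℝ) / 2 + m - 1 = (n / 2 - 1) + m by ring, rpow_add hs]
    field_simp
  have hexp : exp (-(η * s / 2) * (t ^ 2 / s / (g + 1) + 1)) =
      exp (-(η / (2 * (g + 1))) * t ^ 2) * exp (-(η / 2 * s)) := by
    rw [← exp_add]
    congr 1
    field_simp
    ring
  rw [kernelIntegrand, Fker, hpow, hexp]
  ring

/-- The powers of `η` and `G = g + 1` left over by the two moment integrals and the kernel. -/
theorem rpow_moment_factors_eq {η G : ℝ} (hη : 0 < η) (hG : 0 < G) (a b m : ℝ) :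
    (η / (2 * G)) ^ (-(a + 1 - m)) * (1 / (η / 2)) ^ (b + m) * η ^ (a + b) * G ^ (-a) =
      2 ^ (a + b + 1) / η / G ^ (m - 1) := by
  rw [div_div, eq_div_iff (by positivity), show (1 : ℝ) / (η / 2) = 2 / η by ring]
  simp only [rpow_def_of_pos (by positivity : 0 < η / (2 * G)),
    rpow_def_of_pos (by positivity : 0 < 2 / η), rpow_def_of_pos hη, rpow_def_of_pos hG,
    rpow_def_of_pos two_pos, log_div two_ne_zero hη.ne',
    log_div hη.ne' (by positivity : 2 * G ≠ 0), log_mul two_ne_zero hG.ne']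
  rw [← exp_log hη]
  simp only [log_exp, ← exp_add]
  ring_nf

theorem q3_nonneg (p n : ℕ) {m : ℝ} (hm1 : -(n : ℝ) / 2 < m) (hm2 : m < (p : ℝ) / 2 + 1) :
    0 ≤ q3 p n m := by
  have : 0 < Gamma ((p : ℝ) / 2 + 1 - m) := Gamma_pos_of_pos (by linarith)
  have : 0 < Gamma ((n : ℝ) / 2 + m) := Gamma_pos_of_pos (by linarith)
  have : 0 ≤ Gamma ((p : ℝ) / 2) := Gamma_nonneg_of_nonneg (by positivity)
  unfold q3
  positivity

theorem lintegral_lintegral_kernelIntegrand {p : ℕ} (n : ℕ) (hp : 1 ≤ p) {m : ℝ}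
    (hm1 : -(n : ℝ) / 2 < m) (hm2 : m < (p : ℝ) / 2 + 1) (H Pf : ℝ → ℝ) {η g : ℝ}
    (hη : 0 < η) (hg : 0 < g) (hH : 0 ≤ H η) (hP : 0 ≤ Pf g) :
    ∫⁻ x : EuclideanSpace ℝ (Fin p), ∫⁻ s in Ioi 0,
        ENNReal.ofReal (kernelIntegrand p n m H Pf ‖x‖ s η g) =
      ENNReal.ofReal (q3 p n m * (H η / η) * (Pf g / (g + 1) ^ (m - 1))) := by
  have : Nonempty (Fin p) := ⟨⟨0, hp⟩⟩
  set c := η / (2 * (g + 1))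
  set K := η ^ ((p : ℝ) / 2 + (n : ℝ) / 2) * (g + 1) ^ (-(p : ℝ) / 2) * H η * Pf g
  have hK : 0 ≤ K := by positivity
  have : 0 < Gamma ((p : ℝ) / 2 + 1 - m) := Gamma_pos_of_pos (by linarith)
  have : 0 < Gamma ((n : ℝ) / 2 + m) := Gamma_pos_of_pos (by linarith)
  have : 0 < Gamma ((p : ℝ) / 2) := Gamma_pos_of_pos (by positivity)
  have hdim : (Module.finrank ℝ (EuclideanSpace ℝ (Fin p)) : ℝ) = p := by simp
  have hgauss := lintegral_norm_rpow_mul_exp_neg_mul_sq (E := EuclideanSpace ℝ (Fin p))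
    (q := 2 - 2 * m) (c := c) (by rw [hdim]; linarith) (by positivity)
  rw [hdim, show ((p : ℝ) + (2 - 2 * m)) / 2 = p / 2 + 1 - m by ring] at hgauss
  have hgamma := lintegral_rpow_mul_exp_neg_mul_Ioi (a := (n : ℝ) / 2 + m) (r := η / 2)
    (by linarith) (by positivity)
  have hfactor : ∀ᵐ x : EuclideanSpace ℝ (Fin p), ∀ s ∈ Ioi (0 : ℝ),
      ENNReal.ofReal (kernelIntegrand p n m H Pf ‖x‖ s η g) =
        ENNReal.ofReal (‖x‖ ^ (2 - 2 * m) * exp (-c * ‖x‖ ^ 2)) *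
          (ENNReal.ofReal (s ^ ((n : ℝ) / 2 + m - 1) * exp (-(η / 2 * s))) *
            ENNReal.ofReal K) := by
    filter_upwards [Measure.ae_ne volume 0] with x hx s (hs : 0 < s)
    rw [kernelIntegrand_eq p n m H Pf (norm_pos_iff.2 hx) hs (by positivity),
      ← ENNReal.ofReal_mul (by positivity), ← ENNReal.ofReal_mul (by positivity), mul_assoc]
  calc _ = ∫⁻ x : EuclideanSpace ℝ (Fin p),
          ENNReal.ofReal (‖x‖ ^ (2 - 2 * m) * exp (-c * ‖x‖ ^ 2)) *
            ((∫⁻ s in Ioi 0, ENNReal.ofReal (s ^ ((n : ℝ) / 2 + m - 1) * exp (-(η / 2 * s)))) *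
              ENNReal.ofReal K) := by
        refine lintegral_congr_ae ?_
        filter_upwards [hfactor] with x hx
        rw [setLIntegral_congr_fun measurableSet_Ioi hx,
          lintegral_const_mul' _ _ ENNReal.ofReal_ne_top,
          lintegral_mul_const' _ _ ENNReal.ofReal_ne_top]
    _ = ENNReal.ofReal ((π ^ ((p : ℝ) / 2) * Gamma ((p : ℝ) / 2 + 1 - m) / Gamma ((p : ℝ) / 2) *
          c ^ (-((p : ℝ) / 2 + 1 - m))) *
            ((1 / (η / 2)) ^ ((n : ℝ) / 2 + m) * Gamma ((n : ℝ) / 2 + m) * K)) := by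
        rw [hgamma, ← ENNReal.ofReal_mul (by positivity),
          lintegral_mul_const' _ _ ENNReal.ofReal_ne_top, hgauss,
          ← ENNReal.ofReal_mul (by positivity)]
    _ = _ := by
        congr 1
        calc _ = π ^ ((p : ℝ) / 2) * Gamma ((p : ℝ) / 2 + 1 - m) * Gamma ((n : ℝ) / 2 + m) /
              Gamma ((p : ℝ) / 2) * H η * Pf g * (c ^ (-((p : ℝ) / 2 + 1 - m)) *
                (1 / (η / 2)) ^ ((n : ℝ) / 2 + m) * η ^ ((p : ℝ) / 2 + (n : ℝ) / 2) *
                (g + 1) ^ (-((p : ℝ) / 2))) := by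
              simp only [K, neg_div]
              ring
          _ = _ := by
              rw [rpow_moment_factors_eq hη (by positivity), q3]
              field_simp

theorem lintegral_lintegral_lintegral_lintegral_kernelIntegrand {p : ℕ} (n : ℕ) (hp : 1 ≤ p)
    {m : ℝ} (hm1 : -(n : ℝ) / 2 < m) (hm2 : m < (p : ℝ) / 2 + 1) {H Pf : ℝ → ℝ}
    (hHmeas : Measurable H) (hPmeas : Measurable Pf)
    (hHpos : ∀ η : ℝ, 0 < η → 0 ≤ H η) (hPpos : ∀ g : ℝ, 0 < g → 0 ≤ Pf g)
    (hHint : IntegrableOn (fun η : ℝ => H η / η) (Ioi 0))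
    (hPint : IntegrableOn (fun g : ℝ => Pf g / (g + 1) ^ (m - 1)) (Ioi 0)) :
    ∫⁻ x : EuclideanSpace ℝ (Fin p), ∫⁻ s in Ioi 0, ∫⁻ η in Ioi 0, ∫⁻ g in Ioi 0,
        ENNReal.ofReal (kernelIntegrand p n m H Pf ‖x‖ s η g) =
      ENNReal.ofReal (q3 p n m * (∫ η in Ioi (0 : ℝ), H η / η) *
        (∫ g in Ioi (0 : ℝ), Pf g / (g + 1) ^ (m - 1))) := by
  have hHη : ∀ η ∈ Ioi (0 : ℝ), 0 ≤ q3 p n m * (H η / η) := fun η (hη : 0 < η) =>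
    mul_nonneg (q3_nonneg p n hm1 hm2) (div_nonneg (hHpos η hη) hη.le)
  have hPg : ∀ g ∈ Ioi (0 : ℝ), 0 ≤ Pf g / (g + 1) ^ (m - 1) := fun g (hg : 0 < g) =>
    div_nonneg (hPpos g hg) (by positivity)
  have hA := ofReal_integral_eq_lintegral_ofReal (hHint.const_mul (q3 p n m))
    (ae_restrict_of_forall_mem measurableSet_Ioi hHη)
  have hB := ofReal_integral_eq_lintegral_ofReal hPint
    (ae_restrict_of_forall_mem measurableSet_Ioi hPg)
  rw [lintegral_lintegral_lintegral_lintegral_swap (by unfold kernelIntegrand Fker; fun_prop),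
    ← integral_const_mul (q3 p n m), ENNReal.ofReal_mul (setIntegral_nonneg measurableSet_Ioi hHη),
    hA, hB, ← lintegral_mul_const'' _ (by fun_prop)]
  refine setLIntegral_congr_fun measurableSet_Ioi fun η (hη : 0 < η) => ?_
  rw [← lintegral_const_mul'' _ (by fun_prop)]
  refine setLIntegral_congr_fun measurableSet_Ioi fun g (hg : 0 < g) => ?_
  rw [lintegral_lintegral_kernelIntegrand n hp hm1 hm2 H Pf hη hg (hHpos η hη) (hPpos g hg),
    ENNReal.ofReal_mul (hHη η hη)]

theorem main_integral_identity_general (p n : ℕ) (hp : 1 ≤ p) (m : ℝ)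
    (hm1 : -(n : ℝ) / 2 < m) (hm2 : m < (p : ℝ) / 2 + 1)
    (H Pf : ℝ → ℝ) (hHmeas : Measurable H) (hPmeas : Measurable Pf)
    (hHpos : ∀ η : ℝ, 0 < η → 0 ≤ H η) (hPpos : ∀ g : ℝ, 0 < g → 0 ≤ Pf g)
    (hHint : IntegrableOn (fun η : ℝ => H η / η) (Ioi 0))
    (hPint : IntegrableOn (fun g : ℝ => Pf g / (g + 1) ^ (m - 1)) (Ioi 0)) :
    (∫ x : EuclideanSpace ℝ (Fin p), ∫ s in Ioi (0 : ℝ), ∫ η in Ioi (0 : ℝ),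
        ∫ g in Ioi (0 : ℝ),
          (‖x‖ ^ 2 * s ^ ((n : ℝ) / 2 - 1) / (‖x‖ ^ 2 / s) ^ m) *
            Fker p n g η (‖x‖ ^ 2 / s) s * H η * Pf g)
      = q3 p n m * (∫ η in Ioi (0 : ℝ), H η / η) *
          (∫ g in Ioi (0 : ℝ), Pf g / (g + 1) ^ (m - 1)) := by
  have hA₀ : 0 ≤ ∫ η in Ioi (0 : ℝ), H η / η :=
    setIntegral_nonneg measurableSet_Ioi fun η (hη : 0 < η) => div_nonneg (hHpos η hη) hη.le
  have hB₀ : 0 ≤ ∫ g in Ioi (0 : ℝ), Pf g / (g + 1) ^ (m - 1) :=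
    setIntegral_nonneg measurableSet_Ioi fun g (hg : 0 < g) =>
      div_nonneg (hPpos g hg) (by positivity)
  have hlint := lintegral_lintegral_lintegral_lintegral_kernelIntegrand n hp hm1 hm2 hHmeas
    hPmeas hHpos hPpos hHint hPint
  change ∫ x, ∫ s in Ioi 0, ∫ η in Ioi 0, ∫ g in Ioi 0, kernelIntegrand p n m H Pf ‖x‖ s η g = _
  rw [integral_integral_integral_integral_eq_toReal (by unfold kernelIntegrand Fker; fun_prop)
      ?_ (hlint ▸ ENNReal.ofReal_ne_top), hlint,
    ENNReal.toReal_ofReal (mul_nonneg (mul_nonneg (q3_nonneg p n hm1 hm2) hA₀) hB₀)]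
  refine fun x => ae_restrict_of_forall_mem measurableSet_Ioi fun s (hs : 0 < s) => ?_
  refine ae_restrict_of_forall_mem measurableSet_Ioi fun η (hη : 0 < η) => ?_
  refine ae_restrict_of_forall_mem measurableSet_Ioi fun g (hg : 0 < g) => ?_
  exact kernelIntegrand_nonneg p n m _ hs.le hη.le hg.le (hHpos η hη) (hPpos g hg)

/-- Main integral identity (Lemma B.1 of the paper). -/
theorem main_integral_identity (p n : ℕ) (hp : 1 ≤ p) (hn : 1 ≤ n) (m : ℝ)
    (hm1 : -(n : ℝ) / 2 < m) (hm2 : m < (p : ℝ) / 2 + 1)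
    (H Pf : ℝ → ℝ) (hHmeas : Measurable H) (hPmeas : Measurable Pf)
    (hHpos : ∀ η : ℝ, 0 < η → 0 ≤ H η) (hPpos : ∀ g : ℝ, 0 < g → 0 ≤ Pf g)
    (hHint : IntegrableOn (fun η : ℝ => H η / η) (Ioi 0))
    (hPint : IntegrableOn (fun g : ℝ => Pf g / (g + 1) ^ (m - 1)) (Ioi 0)) :
    (∫ x : EuclideanSpace ℝ (Fin p), ∫ s in Ioi (0 : ℝ), ∫ η in Ioi (0 : ℝ),
        ∫ g in Ioi (0 : ℝ),
          (‖x‖ ^ 2 * s ^ ((n : ℝ) / 2 - 1) / (‖x‖ ^ 2 / s) ^ m) *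
            Fker p n g η (‖x‖ ^ 2 / s) s * H η * Pf g)
      = q3 p n m * (∫ η in Ioi (0 : ℝ), H η / η) *
          (∫ g in Ioi (0 : ℝ), Pf g / (g + 1) ^ (m - 1)) :=
  main_integral_identity_general p n hp m hm1 hm2 H Pf hHmeas hPmeas hHpos hPpos hHint hPint
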